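/- Let V be an n-dimensional complex vector space equipped with two Hermitian inner products g and h, and let R̃ be a curvature-type tensor on V: a map R̃(X, Ȳ, Z, W̄), complex linear in X and Z, conjugate linear in Y and W, satisfying the Kähler symmetries R̃(X,Ȳ,Z,W̄) = R̃(Z,Ȳ,X,W̄) = R̃(X,W̄,Z,Ȳ) and the reality condition R̃(X,Ȳ,Z,W̄) = conj(R̃(Y,X̄,W,Z̄)). Suppose the holomorphic sectional curvature bound R̃(v,v̄,v,v̄) ≤ -κ h(v,v)² holds for all v ∈ V and some κ > 0. Then, with indices computed in any basis, g^{i j̄} g^{k l̄} R̃_{i j̄ k l̄} ≤ -((n+1)/(2n)) κ (tr_g h)², where tr_g h = g^{i j̄} h_{i j̄}. -/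

import Mathlib

/-!
Choose a basis `e_a` that is orthonormal for `g` and diagonalises `h`, with eigenvalues `λ_a`;
then `tr_g h = ∑ λ_a` and the double trace is `∑_{a,c} R(e_a, ē_a, e_c, ē_c)`. All `4ⁿ` vectors
`∑ ζ_a e_a` with `ζ_a ∈ {±1, ±i}` have `h`-length `∑ λ_a`, and averaging `R(v, v̄, v, v̄)` over them
kills every term except `R_{aācc̄}` and `R_{ac̄cā} = R_{aācc̄}`. This gives
`2 ∑ R_{aācc̄} - ∑ R_{aāaā} ≤ -κ (∑ λ_a)²`, and together with `R_{aāaā} ≤ -κ λ_a²` and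
`(∑ λ_a)² ≤ n ∑ λ_a²` this is the estimate.
-/

open Matrix Finset
open scoped BigOperators ComplexConjugate ComplexOrder

noncomputable section

namespace Matrix

open scoped MatrixOrder in
theorem exists_mul_conjTranspose_eq_and_conjTranspose_mul_mul_eq_diagonal {𝕜 n : Type*}
    [RCLike 𝕜] [Fintype n] [DecidableEq n] {G H : Matrix n n 𝕜} (hG : G.PosSemidef)
    (hH : H.IsHermitian) :
    ∃ (P : Matrix n n 𝕜) (d : n → ℝ), P * Pᴴ = G ∧ Pᴴ * H * P = diagonal (RCLike.ofReal ∘ d) := by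
  obtain ⟨B, rfl⟩ := CStarAlgebra.nonneg_iff_eq_star_mul_self.mp hG.nonneg
  have hM : (B * H * Bᴴ).IsHermitian := isHermitian_mul_mul_conjTranspose B hH
  set U : Matrix n n 𝕜 := (hM.eigenvectorUnitary : Matrix n n 𝕜)
  have hU : U * Uᴴ = 1 := mem_unitaryGroup_iff.mp hM.eigenvectorUnitary.2
  refine ⟨Bᴴ * U, hM.eigenvalues, ?_, ?_⟩
  · rw [conjTranspose_mul, conjTranspose_conjTranspose, mul_assoc, ← mul_assoc U, hU, one_mul,
      star_eq_conjTranspose]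
  · rw [← hM.conjStarAlgAut_star_eigenvectorUnitary]
    simp [U, mul_assoc, ← star_eq_conjTranspose]

variable {α m n : Type*} [CommSemiring α] [StarRing α] [Fintype m] [Fintype n]

theorem star_dotProduct_transpose_mulVec (H : Matrix n n α) (v : n → α) :
    star v ⬝ᵥ Hᵀ *ᵥ v = ∑ i, ∑ j, H i j * v i * star (v j) := by
  simp only [dotProduct, mulVec, Pi.star_apply, transpose_apply, mul_sum]
  rw [sum_comm]
  exact Finset.sum_congr rfl fun i _ => Finset.sum_congr rfl fun j _ => by ring

theorem star_dotProduct_conjTranspose_mul_mul_mulVec (M : Matrix n n α) (P : Matrix n m α)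
    (u : m → α) : star u ⬝ᵥ (Pᴴ * M * P) *ᵥ u = star (P *ᵥ u) ⬝ᵥ M *ᵥ (P *ᵥ u) := by
  rw [← mulVec_mulVec, ← mulVec_mulVec, dotProduct_mulVec (star u), ← star_mulVec]

end Matrix

theorem re_star_dotProduct_diagonal_mulVec {ι : Type*} [Fintype ι] [DecidableEq ι] (d : ι → ℝ)
    (u : ι → ℂ) :
    (star u ⬝ᵥ diagonal (Complex.ofReal ∘ d) *ᵥ u).re = ∑ a, d a * Complex.normSq (u a) := by
  simp only [dotProduct, mulVec_diagonal, Pi.star_apply, Function.comp_apply, Complex.re_sum,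
    Complex.normSq_apply]
  exact sum_congr rfl fun a _ => by
    simp only [Complex.mul_re, Complex.mul_im, Complex.ofReal_re, Complex.ofReal_im,
      Complex.star_def, Complex.conj_re, Complex.conj_im]
    ring

theorem Fintype.sum_comm_four {α β M : Type*} [Fintype α] [Fintype β] [AddCommMonoid M]
    (f : α → α → α → α → β → M) :
    ∑ i, ∑ j, ∑ k, ∑ l, ∑ a, f i j k l a = ∑ a, ∑ i, ∑ j, ∑ k, ∑ l, f i j k l a := by
  rw [Finset.sum_comm (γ := β)]; refine Finset.sum_congr rfl fun i _ => ?_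
  rw [Finset.sum_comm (γ := β)]; refine Finset.sum_congr rfl fun j _ => ?_
  rw [Finset.sum_comm (γ := β)]; refine Finset.sum_congr rfl fun k _ => ?_
  exact Finset.sum_comm

section CurvatureForm

variable {ι ι' : Type*} [Fintype ι]

def curvatureForm (R : ι → ι → ι → ι → ℂ) (x y z t : ι → ℂ) : ℂ :=
  ∑ i, ∑ j, ∑ k, ∑ l, R i j k l * x i * conj (y j) * z k * conj (t l)

def pullbackCurvature (R : ι → ι → ι → ι → ℂ) (P : Matrix ι ι' ℂ) : ι' → ι' → ι' → ι' → ℂ :=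
  fun a b c d => curvatureForm R (Pᵀ a) (Pᵀ b) (Pᵀ c) (Pᵀ d)

variable {R : ι → ι → ι → ι → ℂ}

theorem curvatureForm_mulVec [Fintype ι'] (P : Matrix ι ι' ℂ) (x y z t : ι' → ℂ) :
    curvatureForm R (P *ᵥ x) (P *ᵥ y) (P *ᵥ z) (P *ᵥ t) =
      curvatureForm (pullbackCurvature R P) x y z t := by
  simp only [curvatureForm, pullbackCurvature, mulVec, dotProduct, transpose_apply, map_sum,
    map_mul, mul_assoc]
  -- distributing a right-nested product brings out the sums over `a, b, c, d` in this order
  simp only [sum_mul]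
  simp only [mul_sum]
  rw [Fintype.sum_comm_four]; refine sum_congr rfl fun a _ => ?_
  rw [Fintype.sum_comm_four]; refine sum_congr rfl fun b _ => ?_
  rw [Fintype.sum_comm_four]; refine sum_congr rfl fun c _ => ?_
  rw [Fintype.sum_comm_four]; refine sum_congr rfl fun d _ => ?_
  exact sum_congr rfl fun i _ => sum_congr rfl fun j _ => sum_congr rfl fun k _ =>
    sum_congr rfl fun l _ => by ring

theorem sum_mul_conjTranspose_mul_curvature [Fintype ι'] (P : Matrix ι ι' ℂ) :
    ∑ i, ∑ j, ∑ k, ∑ l, (P * Pᴴ) i j * (P * Pᴴ) k l * R i j k l =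
      ∑ a, ∑ c, pullbackCurvature R P a a c c := by
  simp only [pullbackCurvature, curvatureForm, mul_apply, conjTranspose_apply, transpose_apply,
    RCLike.star_def, mul_assoc]
  simp only [sum_mul]
  simp only [mul_sum]
  rw [Fintype.sum_comm_four]; refine sum_congr rfl fun a _ => ?_
  rw [Fintype.sum_comm_four]; refine sum_congr rfl fun c _ => ?_
  exact sum_congr rfl fun i _ => sum_congr rfl fun j _ => sum_congr rfl fun k _ =>
    sum_congr rfl fun l _ => by ring

theorem curvatureForm_comm_conj (hR : ∀ i j k l, R i j k l = R i l k j) (x y z t : ι → ℂ) :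
    curvatureForm R x y z t = curvatureForm R x t z y := by
  unfold curvatureForm
  refine sum_congr rfl fun i _ => ?_
  rw [sum_comm]
  conv_rhs => rw [sum_comm]
  refine sum_congr rfl fun k _ => ?_
  rw [sum_comm]
  refine sum_congr rfl fun l _ => sum_congr rfl fun j _ => ?_
  rw [hR i j k l]
  ring

theorem pullbackCurvature_comm_conj (hR : ∀ i j k l, R i j k l = R i l k j)
    (P : Matrix ι ι' ℂ) (a b c d : ι') :
    pullbackCurvature R P a b c d = pullbackCurvature R P a d c b :=
  curvatureForm_comm_conj hR _ _ _ _

theorem curvatureForm_single [DecidableEq ι] (a : ι) :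
    curvatureForm R (Pi.single a 1) (Pi.single a 1) (Pi.single a 1) (Pi.single a 1) =
      R a a a a := by
  simp [curvatureForm, Pi.single_apply]

end CurvatureForm

section Averaging

variable {ι : Type*}

theorem forall_sub_add_sub_eq_zero_iff [DecidableEq ι] {a b c d : ι} :
    (∀ x : ι → ZMod 4, x a - x b + x c - x d = 0) ↔ (b = a ∧ d = c) ∨ (b = c ∧ d = a) := by
  refine ⟨fun h => ?_, ?_⟩
  · have ha := h (Pi.single a 1)
    have hc := h (Pi.single c 1)
    simp only [Pi.single_apply] at ha hc
    split_ifs at ha hc <;> subst_vars <;> tauto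
  · rintro (⟨rfl, rfl⟩ | ⟨rfl, rfl⟩) x <;> ring

variable [Fintype ι] {R : ι → ι → ι → ι → ℂ}

theorem curvatureForm_stdAddChar_comp (x : ι → ZMod 4) :
    curvatureForm R (ZMod.stdAddChar ∘ x) (ZMod.stdAddChar ∘ x) (ZMod.stdAddChar ∘ x)
        (ZMod.stdAddChar ∘ x) =
      ∑ a, ∑ b, ∑ c, ∑ d, R a b c d * ZMod.stdAddChar (x a - x b + x c - x d) := by
  simp only [curvatureForm, Function.comp_apply, sub_eq_add_neg, AddChar.map_add_eq_mul,
    AddChar.map_neg_eq_conj, mul_assoc]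

variable [DecidableEq ι]

theorem expect_stdAddChar_sub_add_sub (a b c d : ι) :
    𝔼 x : ι → ZMod 4, ZMod.stdAddChar (x a - x b + x c - x d) =
      if (b = a ∧ d = c) ∨ (b = c ∧ d = a) then 1 else 0 := by
  let L : (ι → ZMod 4) →+ ZMod 4 :=
    Pi.evalAddMonoidHom (fun _ => ZMod 4) a - Pi.evalAddMonoidHom (fun _ => ZMod 4) b +
      Pi.evalAddMonoidHom (fun _ => ZMod 4) c - Pi.evalAddMonoidHom (fun _ => ZMod 4) d
  have hL : ZMod.stdAddChar.compAddMonoidHom L = 0 ↔ (b = a ∧ d = c) ∨ (b = c ∧ d = a) := by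
    simp only [AddChar.eq_zero_iff, AddChar.compAddMonoidHom_apply,
      ← (ZMod.stdAddChar (N := 4)).map_zero_eq_one, ZMod.injective_stdAddChar.eq_iff]
    exact forall_sub_add_sub_eq_zero_iff
  have hLx : ∀ x, L x = x a - x b + x c - x d := fun x => rfl
  simpa only [AddChar.compAddMonoidHom_apply, hL, hLx] using
    (ZMod.stdAddChar.compAddMonoidHom L).expect_eq_ite

theorem sum_sum_ite_eq_or_swap_eq (f : ι → ι → ℂ) (a c : ι) :
    ∑ b, ∑ d, (if (b = a ∧ d = c) ∨ (b = c ∧ d = a) then f b d else 0) =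
      f a c + f c a - if a = c then f a a else 0 := by
  by_cases hac : a = c
  · subst hac
    simp [ite_and]
  · have hsplit : ∀ b d, (if (b = a ∧ d = c) ∨ (b = c ∧ d = a) then f b d else 0) =
        (if b = a ∧ d = c then f b d else 0) + (if b = c ∧ d = a then f b d else 0) := by
      intro b d
      by_cases h₁ : b = a ∧ d = c
      · rw [if_pos (Or.inl h₁), if_pos h₁, if_neg fun h₂ => hac (h₁.1 ▸ h₂.1), add_zero]
      · rw [if_neg h₁, zero_add, if_congr (or_iff_right h₁) rfl rfl]
    simp [hsplit, sum_add_distrib, ite_and, hac]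

theorem sum_ite_eq_or_swap_eq (f : ι → ι → ι → ι → ℂ) :
    ∑ a, ∑ b, ∑ c, ∑ d, (if (b = a ∧ d = c) ∨ (b = c ∧ d = a) then f a b c d else 0) =
      ∑ a, ∑ c, f a a c c + ∑ a, ∑ c, f a c c a - ∑ a, f a a a a := by
  calc _ = ∑ a, ∑ c, ∑ b, ∑ d, (if (b = a ∧ d = c) ∨ (b = c ∧ d = a) then f a b c d else 0) :=
        sum_congr rfl fun a _ => sum_comm
    _ = ∑ a, ∑ c, (f a a c c + f a c c a - if a = c then f a a c a else 0) :=
        sum_congr rfl fun a _ => sum_congr rfl fun c _ => sum_sum_ite_eq_or_swap_eq (f a · c ·) a c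
    _ = _ := by simp [sum_add_distrib, sum_sub_distrib]

theorem expect_curvatureForm_stdAddChar_comp :
    𝔼 x : ι → ZMod 4, curvatureForm R (ZMod.stdAddChar ∘ x) (ZMod.stdAddChar ∘ x)
        (ZMod.stdAddChar ∘ x) (ZMod.stdAddChar ∘ x) =
      ∑ a, ∑ c, R a a c c + ∑ a, ∑ c, R a c c a - ∑ a, R a a a a := by
  simp only [curvatureForm_stdAddChar_comp, expect_sum_comm, ← mul_expect,
    expect_stdAddChar_sub_add_sub, mul_ite, mul_one, mul_zero]
  exact sum_ite_eq_or_swap_eq R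

theorem two_mul_card_mul_re_sum_le_of_curvatureForm_le {κ : ℝ} {d : ι → ℝ}
    (hR : ∀ i j k l, R i j k l = R i l k j) (hκ : 0 ≤ κ)
    (hHSC : ∀ u, (curvatureForm R u u u u).re ≤ -κ * (∑ a, d a * Complex.normSq (u a)) ^ 2) :
    2 * Fintype.card ι * (∑ a, ∑ c, R a a c c).re ≤
      -(Fintype.card ι + 1) * κ * (∑ a, d a) ^ 2 := by
  set n : ℝ := (Fintype.card ι : ℝ)
  have haverage : 2 * (∑ a, ∑ c, R a a c c).re - (∑ a, R a a a a).re ≤ -κ * (∑ a, d a) ^ 2 := by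
    have hphase := expect_le univ_nonempty fun x (_ : x ∈ univ) => by
      simpa [Complex.normSq_eq_norm_sq] using hHSC (ZMod.stdAddChar (N := 4) ∘ x)
    have hswap : ∑ a, ∑ c, R a c c a = ∑ a, ∑ c, R a a c c :=
      sum_congr rfl fun a _ => sum_congr rfl fun c _ => hR a c c a
    rw [← Complex.re_expect, expect_curvatureForm_stdAddChar_comp, hswap] at hphase
    simpa only [two_mul, Complex.sub_re, Complex.add_re, neg_mul] using hphase
  have hdiag : (∑ a, R a a a a).re ≤ -κ * ∑ a, d a ^ 2 := by
    rw [Complex.re_sum, mul_sum]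
    exact sum_le_sum fun a _ => by
      simpa [curvatureForm_single, Pi.single_apply] using hHSC (Pi.single a 1)
  have hCS : (∑ a, d a) ^ 2 ≤ n * ∑ a, d a ^ 2 := sq_sum_le_card_mul_sum_sq
  calc 2 * n * (∑ a, ∑ c, R a a c c).re = n * (2 * (∑ a, ∑ c, R a a c c).re) := by ring
    _ ≤ n * (-κ * ∑ a, d a ^ 2 - κ * (∑ a, d a) ^ 2) := by gcongr; linarith
    _ ≤ -(n + 1) * κ * (∑ a, d a) ^ 2 := by nlinarith [mul_le_mul_of_nonneg_left hCS hκ]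

end Averaging

theorem royden_trace_estimate_general
    {n : ℕ} (hn : 0 < n) {κ : ℝ} (hκ : 0 < κ)
    (g h : Matrix (Fin n) (Fin n) ℂ) (hg : g.PosDef) (hh : h.PosDef)
    (R : Fin n → Fin n → Fin n → Fin n → ℂ)
    (hsymm₂ : ∀ i j k l, R i j k l = R i l k j)
    (hHSC : ∀ v : Fin n → ℂ,
      (∑ i, ∑ j, ∑ k, ∑ l, R i j k l * v i * conj (v j) * v k * conj (v l)).re ≤
        -κ * ((∑ i, ∑ j, h i j * v i * conj (v j)).re) ^ 2) :
    (∑ i, ∑ j, ∑ k, ∑ l, (g⁻¹) j i * (g⁻¹) l k * R i j k l).re ≤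
      -((n + 1 : ℝ) / (2 * n)) * κ * (((g⁻¹ * h).trace).re) ^ 2 := by
  -- `∑ h i j * v i * conj (v j) = star v ⬝ᵥ hᵀ *ᵥ v`, so the Hermitian forms are `gᵀ` and `hᵀ`
  obtain ⟨P, d, hPP, hPhP⟩ := exists_mul_conjTranspose_eq_and_conjTranspose_mul_mul_eq_diagonal
    hg.transpose.inv.posSemidef hh.1.transpose
  rw [← transpose_nonsing_inv] at hPP
  rw [RCLike.ofReal_eq_complex_ofReal] at hPhP
  have hframe : ∀ u, (curvatureForm (pullbackCurvature R P) u u u u).re ≤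
      -κ * (∑ a, d a * Complex.normSq (u a)) ^ 2 := fun u => by
    rw [← curvatureForm_mulVec, ← re_star_dotProduct_diagonal_mulVec, ← hPhP,
      star_dotProduct_conjTranspose_mul_mul_mulVec, star_dotProduct_transpose_mulVec]
    exact hHSC (P *ᵥ u)
  have hcontract : ∑ i, ∑ j, ∑ k, ∑ l, (g⁻¹) j i * (g⁻¹) l k * R i j k l =
      ∑ a, ∑ c, pullbackCurvature R P a a c c := by
    rw [← sum_mul_conjTranspose_mul_curvature, hPP]
    rfl
  have htrace : (g⁻¹ * h).trace = ((∑ a, d a : ℝ) : ℂ) := by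
    rw [← trace_transpose, transpose_mul, ← hPP, ← mul_assoc, trace_mul_comm, ← mul_assoc, hPhP,
      trace_diagonal, Complex.ofReal_sum]
    rfl
  have hkey := two_mul_card_mul_re_sum_le_of_curvatureForm_le
    (pullbackCurvature_comm_conj hsymm₂ P) hκ.le hframe
  rw [Fintype.card_fin] at hkey
  rw [hcontract, htrace, Complex.ofReal_re, show -((n + 1 : ℝ) / (2 * n)) * κ * (∑ a, d a) ^ 2 =
    -(n + 1) * κ * (∑ a, d a) ^ 2 / (2 * n) by ring, le_div_iff₀ (by positivity)]
  linarith

/-- **Royden's lemma (algebraic form).** Let `g, h` be two Hermitian positive definite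
inner products on an `n`-dimensional complex vector space, given in a basis by the
Hermitian positive definite matrices `g i j = g(eᵢ, eⱼ)`, `h i j = h(eᵢ, eⱼ)`, and let
`R` be a curvature-type tensor, i.e. `R i j k l = R̃(eᵢ, ēⱼ, eₖ, ē_l)` satisfies the
Kähler symmetries `R̃(X,Ȳ,Z,W̄) = R̃(Z,Ȳ,X,W̄) = R̃(X,W̄,Z,Ȳ)` and the reality condition
`R̃(X,Ȳ,Z,W̄) = conj R̃(Y,X̄,W,Z̄)`. If the holomorphic sectional curvature bound
`R̃(v,v̄,v,v̄) ≤ -κ h(v,v)²` holds for all `v` and some `κ > 0`, then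
`g^{ij̄} g^{kl̄} R̃_{ij̄kl̄} ≤ -((n+1)/(2n)) κ (tr_g h)²`, where `g^{ij̄} = ((g⁻¹)ᵀ) i j`
and `tr_g h = g^{ij̄} h_{ij̄} = tr (g⁻¹ * h)`. -/
theorem royden_trace_estimate
    {n : ℕ} (hn : 0 < n) {κ : ℝ} (hκ : 0 < κ)
    (g h : Matrix (Fin n) (Fin n) ℂ) (hg : g.PosDef) (hh : h.PosDef)
    (R : Fin n → Fin n → Fin n → Fin n → ℂ)
    (hsymm₁ : ∀ i j k l, R i j k l = R k j i l)
    (hsymm₂ : ∀ i j k l, R i j k l = R i l k j)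
    (hconj : ∀ i j k l, R i j k l = conj (R j i l k))
    (hHSC : ∀ v : Fin n → ℂ,
      (∑ i, ∑ j, ∑ k, ∑ l, R i j k l * v i * conj (v j) * v k * conj (v l)).re ≤
        -κ * ((∑ i, ∑ j, h i j * v i * conj (v j)).re) ^ 2) :
    (∑ i, ∑ j, ∑ k, ∑ l, (g⁻¹) j i * (g⁻¹) l k * R i j k l).re ≤
      -((n + 1 : ℝ) / (2 * n)) * κ * (((g⁻¹ * h).trace).re) ^ 2 :=
  royden_trace_estimate_general hn hκ g h hg hh R hsymm₂ hHSC
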